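/- arXiv:1905.10817 — 3 statements merged into one kernel-verified Lean document; each statement's English description precedes it below -/
import Mathlib

section
/- Suppose the player's predictions b_t satisfy: for every (p,λ) ∈ Δ_{L+1} × [0, λ_max] with λ_max ≥ 1, (1/T)Σ_t l(b_t, λ, y_t) − (1/T)Σ_t l(⟨p, S_t(x_t)⟩, λ_t, y_t) ≤ R, where l(b, λ, y) = f(b,y) + λ(g(b,y) − γ). If there exists an index k (the artificial expert) such that g(S_t^k(x_t), y_t) ≤ γ for all t, and f takes values in [0,1], then (1/T)Σ_t g(b_t, y_t) ≤ γ + R + 1. -/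
open Finset

/-! The bound comes from playing the regret guarantee against the artificial expert `e_k` with
multiplier `μ = 1`. Since the expert is feasible and `λ_t ≥ 0`, its Lagrangian loss is at most
its `f`-loss, hence at most `1`; on the player's side `f ≥ 0` gives
`l(b_t, 1, y_t) ≥ g(b_t, y_t) - γ`. -/

lemma mean_range_le_of_forall_le {T : ℕ} (hT : 0 < T) {a : ℕ → ℝ} {c : ℝ}
    (h : ∀ t ∈ range T, a t ≤ c) : (1 / T : ℝ) * ∑ t ∈ range T, a t ≤ c := by
  have hT' : (0 : ℝ) < T := by exact_mod_cast hT
  calc (1 / T : ℝ) * ∑ t ∈ range T, a t ≤ (1 / T : ℝ) * ∑ _t ∈ range T, c := by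
        gcongr with t ht
        exact h t ht
    _ = c := by field_simp; simp

lemma mean_range_sub_const {T : ℕ} (hT : T ≠ 0) (a : ℕ → ℝ) (c : ℝ) :
    (1 / T : ℝ) * ∑ t ∈ range T, (a t - c) = (1 / T : ℝ) * ∑ t ∈ range T, a t - c := by
  simp only [sum_sub_distrib, sum_const, card_range, nsmul_eq_mul]
  field_simp

lemma sum_single_one_mul {ι : Type*} [Fintype ι] [DecidableEq ι] (k : ι) (v : ι → ℝ) :
    ∑ j, (Pi.single k 1 : ι → ℝ) j * v j = v k := by
  simp [Pi.single_apply]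

theorem stmt_1_general (T L : ℕ) (hT : 1 ≤ T)
    (f g : ℝ → ℝ → ℝ) (γ R lamMax : ℝ)
    (hlamMax : 1 ≤ lamMax)
    (hf01 : ∀ b y : ℝ, f b y ∈ Set.Icc (0 : ℝ) 1)
    (b lam y : ℕ → ℝ) (x : ℕ → ℝ)
    (S : ℕ → ℝ → (Fin (L + 1) → ℝ))
    (hlam : ∀ t, lam t ∈ Set.Icc (0 : ℝ) lamMax)
    (l : ℝ → ℝ → ℝ → ℝ)
    (hl : ∀ b' μ y', l b' μ y' = f b' y' + μ * (g b' y' - γ))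
    (hregret : ∀ p ∈ stdSimplex ℝ (Fin (L + 1)), ∀ μ ∈ Set.Icc (0 : ℝ) lamMax,
      (1 / T : ℝ) * ∑ t ∈ Finset.range T, l (b t) μ (y t)
        - (1 / T : ℝ) * ∑ t ∈ Finset.range T, l (∑ k, p k * S t (x t) k) (lam t) (y t)
        ≤ R)
    (k : Fin (L + 1))
    (hexpert : ∀ t, g (S t (x t) k) (y t) ≤ γ) :
    (1 / T : ℝ) * ∑ t ∈ Finset.range T, g (b t) (y t) ≤ γ + R + 1 := by
  have hvertex := hregret (Pi.single k 1) (single_mem_stdSimplex ℝ k) 1 ⟨zero_le_one, hlamMax⟩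
  simp only [sum_single_one_mul] at hvertex
  have hexpert_mean : (1 / T : ℝ) * ∑ t ∈ range T, l (S t (x t) k) (lam t) (y t) ≤ 1 :=
    mean_range_le_of_forall_le hT fun t _ => by
      have hpenalty : lam t * (g (S t (x t) k) (y t) - γ) ≤ 0 :=
        mul_nonpos_of_nonneg_of_nonpos (hlam t).1 (sub_nonpos.2 (hexpert t))
      rw [hl]
      linarith [(hf01 (S t (x t) k) (y t)).2]
  have hplayer_mean : (1 / T : ℝ) * ∑ t ∈ range T, g (b t) (y t) - γ
      ≤ (1 / T : ℝ) * ∑ t ∈ range T, l (b t) 1 (y t) := by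
    rw [← mean_range_sub_const (by omega)]
    gcongr with t
    rw [hl]
    linarith [(hf01 (b t) (y t)).1]
  linarith

/-- Constraint-violation bound: if the combined regret bound holds and there is an
artificial expert satisfying the constraint at every round, then the average
constraint loss of the predictions is at most γ + R + 1. -/
theorem stmt_1 (T L : ℕ) (hT : 1 ≤ T)
    (f g : ℝ → ℝ → ℝ) (γ R lamMax : ℝ)
    (hlamMax : 1 ≤ lamMax) (hR : 0 ≤ R)
    (hf01 : ∀ b y : ℝ, f b y ∈ Set.Icc (0 : ℝ) 1)
    (b lam y : ℕ → ℝ) (x : ℕ → ℝ)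
    (S : ℕ → ℝ → (Fin (L + 1) → ℝ))
    (hlam : ∀ t, lam t ∈ Set.Icc (0 : ℝ) lamMax)
    (l : ℝ → ℝ → ℝ → ℝ)
    (hl : ∀ b' μ y', l b' μ y' = f b' y' + μ * (g b' y' - γ))
    (hregret : ∀ p ∈ stdSimplex ℝ (Fin (L + 1)), ∀ μ ∈ Set.Icc (0 : ℝ) lamMax,
      (1 / T : ℝ) * ∑ t ∈ Finset.range T, l (b t) μ (y t)
        - (1 / T : ℝ) * ∑ t ∈ Finset.range T, l (∑ k, p k * S t (x t) k) (lam t) (y t)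
        ≤ R)
    (k : Fin (L + 1))
    (hexpert : ∀ t, g (S t (x t) k) (y t) ≤ γ) :
    (1 / T : ℝ) * ∑ t ∈ Finset.range T, g (b t) (y t) ≤ γ + R + 1 :=
  stmt_1_general T L hT f g γ R lamMax hlamMax hf01 b lam y x S hlam l hl hregret k hexpert
end

section
/- The Exponentiated Gradient regret bound: let ℓ_t : Δ_N → [0,1] be convex differentiable loss functions with gradients bounded in sup-norm by G. Let p_1 be uniform and p_{t+1,k} ∝ p_{t,k}·exp(−η ∇_k ℓ_t(p_t)). Then for η = (1/G)√(log N / T) and every q ∈ Δ_N: Σ_{t=1}^T ℓ_t(p_t) − Σ_{t=1}^T ℓ_t(q) ≤ 2G√(T log N). -/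
/-!
Write `g_t` for the gradient at round `t` and `L_t = ∑_{s<t} g_s`. The EG iterate is the
exponential-weights distribution `p_t ∝ exp (-η L_t)`. By convexity the regret is at most the
linearized regret `∑_t ⟨g_t, p_t - q⟩`. The log-partition function `Φ(L) = log ∑_k exp (-η L_k)`
equals `log N` at `L_0 = 0`, grows by at most `-η ⟨p_t, g_t⟩ + η² G² / 2` per round (Hoeffding's
lemma applied to `g_t` under `p_t`), and ends above `-η ⟨q, L_T⟩`. Hence the linearized regret is at
most `log N / η + T η G² / 2`, which equals `(3/2) G √(T log N)` for the given `η`.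
-/

open Real Finset

theorem ConvexOn.sub_le_fderiv_apply_sub {E : Type*} [NormedAddCommGroup E] [NormedSpace ℝ E]
    {s : Set E} {f : E → ℝ} (hf : ConvexOn ℝ s f) {x y : E} (hx : x ∈ s) (hy : y ∈ s)
    (hd : DifferentiableAt ℝ f x) : f x - f y ≤ fderiv ℝ f x (x - y) := by
  have hline := (hf.comp_affineMap (AffineMap.lineMap x y)).le_slope_of_hasDerivAt
    (x := 0) (y := 1) (by simpa using hx) (by simpa using hy) one_pos
    (hd.hasFDerivAt.comp_hasDerivAt_of_eq 0 AffineMap.hasDerivAt_lineMap (by simp))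
  simp only [slope_def_field, Function.comp_apply, AffineMap.lineMap_apply_zero,
    AffineMap.lineMap_apply_one, sub_zero, div_one, map_sub] at hline
  rw [map_sub]
  linarith

theorem ContinuousLinearMap.apply_eq_dotProduct {ι : Type*} [Fintype ι] [DecidableEq ι]
    (f : (ι → ℝ) →L[ℝ] ℝ) (v : ι → ℝ) : f v = (fun k => f (Pi.single k 1)) ⬝ᵥ v := by
  conv_lhs => rw [← univ_sum_single v]
  simp only [map_sum, dotProduct]
  refine sum_congr rfl fun k _ => ?_
  rw [show Pi.single k (v k) = v k • Pi.single k (1 : ℝ) by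
      rw [← Pi.single_smul', smul_eq_mul, mul_one],
    map_smul, smul_eq_mul, mul_comm]

/-- Hoeffding's lemma, for the distribution `p` on a finite type. -/
theorem sum_mul_exp_le_of_mem_Icc {ι : Type*} [Fintype ι] {p g : ι → ℝ}
    (hp : p ∈ stdSimplex ℝ ι) {a b : ℝ} (hg : ∀ k, g k ∈ Set.Icc a b) (t : ℝ) :
    ∑ k, p k * exp (t * g k) ≤ exp (t * (p ⬝ᵥ g) + (b - a) ^ 2 * t ^ 2 / 8) := by
  let _ : MeasurableSpace ι := ⊤
  have : MeasurableSingletonClass ι := ⟨fun _ => trivial⟩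
  let P : PMF ι := PMF.ofFintype (fun k => ENNReal.ofReal (p k)) (by
    rw [← ENNReal.ofReal_sum_of_nonneg fun k _ => hp.1 k, hp.2, ENNReal.ofReal_one])
  have hintegral (f : ι → ℝ) : ∫ k, f k ∂P.toMeasure = ∑ k, p k * f k := by
    rw [PMF.integral_eq_sum]
    simp [P, ENNReal.toReal_ofReal (hp.1 _)]
  have hoeffding := (ProbabilityTheory.hasSubgaussianMGF_of_mem_Icc
    (measurable_of_countable g).aemeasurable (MeasureTheory.ae_of_all P.toMeasure hg)).mgf_le t
  simp only [ProbabilityTheory.mgf, hintegral] at hoeffding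
  have hvariance : (((‖b - a‖₊ / 2) ^ 2 : NNReal) : ℝ) = (b - a) ^ 2 / 4 := by
    push_cast
    rw [norm_eq_abs, div_pow, sq_abs]
    norm_num
  calc ∑ k, p k * exp (t * g k)
      = exp (t * (p ⬝ᵥ g)) * ∑ k, p k * exp (t * (g k - p ⬝ᵥ g)) := by
        rw [mul_sum]
        refine sum_congr rfl fun k _ => ?_
        rw [mul_left_comm, ← exp_add]
        ring_nf
    _ ≤ exp (t * (p ⬝ᵥ g)) * exp ((b - a) ^ 2 / 4 * t ^ 2 / 2) := by
        rw [← hvariance]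
        gcongr
        exact hoeffding
    _ = exp (t * (p ⬝ᵥ g) + (b - a) ^ 2 * t ^ 2 / 8) := by
        rw [← exp_add]
        ring_nf

section ExpWeights

variable {ι : Type*} [Fintype ι]

noncomputable def expWeights (η : ℝ) (L : ι → ℝ) (k : ι) : ℝ :=
  exp (-η * L k) / ∑ j, exp (-η * L j)

noncomputable def logPartition (η : ℝ) (L : ι → ℝ) : ℝ :=
  log (∑ k, exp (-η * L k))

theorem sum_exp_pos [Nonempty ι] (η : ℝ) (L : ι → ℝ) : 0 < ∑ k, exp (-η * L k) :=
  sum_pos (fun _ _ => exp_pos _) univ_nonempty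

theorem expWeights_mem_stdSimplex [Nonempty ι] (η : ℝ) (L : ι → ℝ) :
    expWeights η L ∈ stdSimplex ℝ ι :=
  ⟨fun _ => div_nonneg (exp_pos _).le (sum_exp_pos η L).le,
    by simp only [expWeights, ← sum_div, div_self (sum_exp_pos η L).ne']⟩

theorem expWeights_zero (η : ℝ) :
    expWeights η (0 : ι → ℝ) = fun _ => 1 / (Fintype.card ι : ℝ) := by
  ext k
  simp [expWeights]

theorem expWeights_mul_exp (η : ℝ) (L g : ι → ℝ) (k : ι) :
    expWeights η L k * exp (-η * g k) = exp (-η * (L + g) k) / ∑ j, exp (-η * L j) := by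
  rw [expWeights, div_mul_eq_mul_div, ← exp_add, Pi.add_apply, mul_add]

theorem sum_expWeights_mul_exp (η : ℝ) (L g : ι → ℝ) :
    ∑ k, expWeights η L k * exp (-η * g k) =
      (∑ k, exp (-η * (L + g) k)) / ∑ k, exp (-η * L k) := by
  simp only [expWeights_mul_exp, sum_div]

theorem expWeights_mul_exp_div_sum [Nonempty ι] (η : ℝ) (L g : ι → ℝ) (k : ι) :
    expWeights η L k * exp (-η * g k) / ∑ j, expWeights η L j * exp (-η * g j) =
      expWeights η (L + g) k := by
  rw [expWeights_mul_exp, sum_expWeights_mul_exp,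
    div_div_div_cancel_right₀ (sum_exp_pos η L).ne']
  rfl

theorem logPartition_zero (η : ℝ) : logPartition η (0 : ι → ℝ) = log (Fintype.card ι) := by
  simp [logPartition]

theorem logPartition_add_sub_le [Nonempty ι] {η G : ℝ} (L g : ι → ℝ) (hg : ∀ k, |g k| ≤ G) :
    logPartition η (L + g) - logPartition η L ≤
      -η * (expWeights η L ⬝ᵥ g) + η ^ 2 * G ^ 2 / 2 := by
  rw [logPartition, logPartition,
    ← log_div (sum_exp_pos η (L + g)).ne' (sum_exp_pos η L).ne',
    log_le_iff_le_exp (div_pos (sum_exp_pos η (L + g)) (sum_exp_pos η L)),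
    ← sum_expWeights_mul_exp]
  convert sum_mul_exp_le_of_mem_Icc (expWeights_mem_stdSimplex η L)
    (fun k => abs_le.mp (hg k)) (-η) using 2
  ring

theorem neg_mul_dotProduct_le_logPartition [Nonempty ι] (η : ℝ) (L : ι → ℝ) {q : ι → ℝ}
    (hq : q ∈ stdSimplex ℝ ι) : -η * (q ⬝ᵥ L) ≤ logPartition η L := by
  have hle (k : ι) : -η * L k ≤ logPartition η L := by
    rw [logPartition, le_log_iff_exp_le (sum_exp_pos η L)]
    exact single_le_sum (f := fun j => exp (-η * L j)) (fun _ _ => (exp_pos _).le) (mem_univ k)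
  calc -η * (q ⬝ᵥ L) = ∑ k, q k * (-η * L k) := by
        rw [dotProduct, mul_sum]
        exact sum_congr rfl fun k _ => by ring
    _ ≤ ∑ k, q k * logPartition η L :=
        sum_le_sum fun k _ => mul_le_mul_of_nonneg_left (hle k) (hq.1 k)
    _ = logPartition η L := by rw [← sum_mul, hq.2, one_mul]

theorem sum_dotProduct_sub_le_of_eq_expWeights [Nonempty ι] {η G : ℝ} (hη : 0 < η)
    (g : ℕ → ι → ℝ) (hg : ∀ t k, |g t k| ≤ G) (p : ℕ → ι → ℝ)
    (hp : ∀ t, p t = expWeights η (∑ s ∈ range t, g s)) {q : ι → ℝ} (hq : q ∈ stdSimplex ℝ ι)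
    (T : ℕ) :
    ∑ t ∈ range T, g t ⬝ᵥ (p t - q) ≤ log (Fintype.card ι) / η + T * η * G ^ 2 / 2 := by
  set L : ℕ → ι → ℝ := fun t => ∑ s ∈ range t, g s
  have hpotential : logPartition η (L T) - log (Fintype.card ι) ≤
      ∑ t ∈ range T, (-η * (p t ⬝ᵥ g t) + η ^ 2 * G ^ 2 / 2) := by
    rw [← logPartition_zero η, ← sum_range_zero g,
      ← sum_range_sub (fun t => logPartition η (L t))]
    refine sum_le_sum fun t _ => ?_
    rw [show L (t + 1) = L t + g t from sum_range_succ g t, hp t]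
    exact logPartition_add_sub_le (L t) (g t) (hg t)
  have hcomparator := neg_mul_dotProduct_le_logPartition η (L T) hq
  have hsplit : ∑ t ∈ range T, g t ⬝ᵥ (p t - q) = ∑ t ∈ range T, p t ⬝ᵥ g t - q ⬝ᵥ L T := by
    simp only [L, dotProduct_sum, ← sum_sub_distrib, dotProduct_comm (g _), sub_dotProduct]
  rw [sum_add_distrib, ← mul_sum, sum_const, card_range, nsmul_eq_mul] at hpotential
  rw [hsplit, ← mul_le_mul_iff_right₀ hη]
  calc η * (∑ t ∈ range T, p t ⬝ᵥ g t - q ⬝ᵥ L T)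
      ≤ log (Fintype.card ι) + T * (η ^ 2 * G ^ 2 / 2) := by linarith
    _ = η * (log (Fintype.card ι) / η + T * η * G ^ 2 / 2) := by field_simp

end ExpWeights

theorem div_add_mul_sq_div_two_eq_of_eq_sqrt {c T G η : ℝ} (hc : 0 < c) (hT : 0 < T)
    (hG : 0 < G) (hη : η = 1 / G * √(c / T)) :
    c / η + T * η * G ^ 2 / 2 = 3 / 2 * G * √(T * c) := by
  rw [hη, sqrt_div hc.le, sqrt_mul hT.le]
  nth_rewrite 1 [← sq_sqrt hc.le]
  nth_rewrite 2 [← sq_sqrt hT.le]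
  field_simp
  ring

theorem stmt_6_general (N T : ℕ) (hN : 2 ≤ N) (hT : 1 ≤ T)
    (G : ℝ) (hG : 0 < G)
    (ℓ : ℕ → (Fin N → ℝ) → ℝ)
    (hconv : ∀ t, ConvexOn ℝ (stdSimplex ℝ (Fin N)) (ℓ t))
    (hdiff : ∀ t (q : Fin N → ℝ), DifferentiableAt ℝ (ℓ t) q)
    (gr : ℕ → (Fin N → ℝ) → Fin N → ℝ)
    (hgr : ∀ t (q : Fin N → ℝ) (k : Fin N), gr t q k = fderiv ℝ (ℓ t) q (Pi.single k 1))
    (hgrbd : ∀ t, ∀ q ∈ stdSimplex ℝ (Fin N), ∀ k, |gr t q k| ≤ G)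
    (η : ℝ) (hη : η = (1 / G) * Real.sqrt (Real.log N / T))
    (p : ℕ → Fin N → ℝ)
    (hp0 : ∀ k, p 0 k = 1 / N)
    (hupd : ∀ t k, p (t + 1) k =
      p t k * Real.exp (-η * gr t (p t) k) /
        ∑ j, p t j * Real.exp (-η * gr t (p t) j)) :
    ∀ q ∈ stdSimplex ℝ (Fin N),
      ∑ t ∈ Finset.range T, ℓ t (p t) - ∑ t ∈ Finset.range T, ℓ t q
        ≤ 2 * G * Real.sqrt (T * Real.log N) := by
  intro q hq
  have : Nonempty (Fin N) := ⟨⟨0, by omega⟩⟩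
  have hlogN : 0 < log N := log_pos (by exact_mod_cast hN)
  have hTpos : (0 : ℝ) < T := by exact_mod_cast hT
  have hηpos : 0 < η := by rw [hη]; positivity
  have hp (t : ℕ) : p t = expWeights η (∑ s ∈ range t, gr s (p s)) := by
    induction t with
    | zero => ext k; rw [hp0, sum_range_zero, expWeights_zero, Fintype.card_fin]
    | succ t ih => ext k; rw [hupd, sum_range_succ, ← expWeights_mul_exp_div_sum, ← ih]
  have hmem (t : ℕ) : p t ∈ stdSimplex ℝ (Fin N) := hp t ▸ expWeights_mem_stdSimplex _ _
  have hlinearize (t : ℕ) : ℓ t (p t) - ℓ t q ≤ gr t (p t) ⬝ᵥ (p t - q) := by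
    have h := (hconv t).sub_le_fderiv_apply_sub (hmem t) hq (hdiff t (p t))
    rwa [ContinuousLinearMap.apply_eq_dotProduct, ← funext (hgr t (p t))] at h
  have hlinear := sum_dotProduct_sub_le_of_eq_expWeights hηpos (fun t => gr t (p t))
    (fun t => hgrbd t (p t) (hmem t)) p hp hq T
  rw [Fintype.card_fin] at hlinear
  calc ∑ t ∈ range T, ℓ t (p t) - ∑ t ∈ range T, ℓ t q
      ≤ ∑ t ∈ range T, gr t (p t) ⬝ᵥ (p t - q) := by
        rw [← sum_sub_distrib]
        exact sum_le_sum fun t _ => hlinearize t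
    _ ≤ log N / η + T * η * G ^ 2 / 2 := hlinear
    _ = 3 / 2 * G * √(T * log N) := div_add_mul_sq_div_two_eq_of_eq_sqrt hlogN hTpos hG hη
    _ ≤ 2 * G * √(T * log N) := by gcongr; norm_num

/-- Exponentiated Gradient regret bound: for convex differentiable losses on the
simplex with values in [0,1] and gradients bounded in sup-norm by G, the EG
update with η = (1/G)√(log N / T) has regret at most 2G√(T log N). -/
theorem stmt_6 (N T : ℕ) (hN : 2 ≤ N) (hT : 1 ≤ T)
    (G : ℝ) (hG : 0 < G)
    (ℓ : ℕ → (Fin N → ℝ) → ℝ)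
    (hconv : ∀ t, ConvexOn ℝ (stdSimplex ℝ (Fin N)) (ℓ t))
    (hdiff : ∀ t (q : Fin N → ℝ), DifferentiableAt ℝ (ℓ t) q)
    (hrange : ∀ t, ∀ q ∈ stdSimplex ℝ (Fin N), ℓ t q ∈ Set.Icc (0 : ℝ) 1)
    (gr : ℕ → (Fin N → ℝ) → Fin N → ℝ)
    (hgr : ∀ t (q : Fin N → ℝ) (k : Fin N), gr t q k = fderiv ℝ (ℓ t) q (Pi.single k 1))
    (hgrbd : ∀ t, ∀ q ∈ stdSimplex ℝ (Fin N), ∀ k, |gr t q k| ≤ G)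
    (η : ℝ) (hη : η = (1 / G) * Real.sqrt (Real.log N / T))
    (p : ℕ → Fin N → ℝ)
    (hp0 : ∀ k, p 0 k = 1 / N)
    (hupd : ∀ t k, p (t + 1) k =
      p t k * Real.exp (-η * gr t (p t) k) /
        ∑ j, p t j * Real.exp (-η * gr t (p t) j)) :
    ∀ q ∈ stdSimplex ℝ (Fin N),
      ∑ t ∈ Finset.range T, ℓ t (p t) - ∑ t ∈ Finset.range T, ℓ t q
        ≤ 2 * G * Real.sqrt (T * Real.log N) :=
  stmt_6_general N T hN hT G hG ℓ hconv hdiff gr hgr hgrbd η hη p hp0 hupd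
end

section
/- Suppose f and g take values in [0,1], λ_t ∈ [0, λ_max], and the combined regret bound (1/T)Σ_t l(b_t, λ, y_t) − (1/T)Σ_t l(⟨p, S_t(x_t)⟩, λ_t, y_t) ≤ R holds for all (p, λ) ∈ Δ_{L+1} × [0, λ_max]. If additionally an artificial expert k satisfies g(S_t^k(x_t), y_t) ≤ γ for all t, then choosing λ = λ_max instead of λ = 1 yields the sharper constraint bound (1/T)Σ_t g(b_t, y_t) ≤ γ + (R + 1)/λ_max. -/
/-- Sharper constraint-violation bound: choosing λ = λ_max in the regret bound
yields average constraint loss at most γ + (R + 1)/λ_max. -/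
theorem stmt_9 (T L : ℕ) (hT : 1 ≤ T)
    (f g : ℝ → ℝ → ℝ) (γ R lamMax : ℝ)
    (hlamMax : 1 ≤ lamMax) (hR : 0 ≤ R)
    (hf01 : ∀ b y : ℝ, f b y ∈ Set.Icc (0 : ℝ) 1)
    (hg01 : ∀ b y : ℝ, g b y ∈ Set.Icc (0 : ℝ) 1)
    (b lam y : ℕ → ℝ) (x : ℕ → ℝ)
    (S : ℕ → ℝ → (Fin (L + 1) → ℝ))
    (hlam : ∀ t, lam t ∈ Set.Icc (0 : ℝ) lamMax)
    (l : ℝ → ℝ → ℝ → ℝ)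
    (hl : ∀ b' μ y', l b' μ y' = f b' y' + μ * (g b' y' - γ))
    (hregret : ∀ p ∈ stdSimplex ℝ (Fin (L + 1)), ∀ μ ∈ Set.Icc (0 : ℝ) lamMax,
      (1 / T : ℝ) * ∑ t ∈ Finset.range T, l (b t) μ (y t)
        - (1 / T : ℝ) * ∑ t ∈ Finset.range T, l (∑ k, p k * S t (x t) k) (lam t) (y t)
        ≤ R)
    (k : Fin (L + 1))
    (hexpert : ∀ t, g (S t (x t) k) (y t) ≤ γ) :
    (1 / T : ℝ) * ∑ t ∈ Finset.range T, g (b t) (y t) ≤ γ + (R + 1) / lamMax := by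
  have hlamPos : (0:ℝ) < lamMax := lt_of_lt_of_le one_pos hlamMax
  have hTpos : (0:ℝ) < (T:ℝ) := by exact_mod_cast hT
  set p : Fin (L + 1) → ℝ := fun j => if j = k then 1 else 0 with hp
  have hpS : p ∈ stdSimplex ℝ (Fin (L + 1)) := by
    constructor
    · intro j; simp only [hp]; split <;> norm_num
    · simp [hp]
  have hμ : lamMax ∈ Set.Icc (0:ℝ) lamMax := ⟨le_of_lt hlamPos, le_refl _⟩
  have hkey := hregret p hpS lamMax hμ
  have hsum : ∀ t, (∑ j, p j * S t (x t) j) = S t (x t) k := by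
    intro t
    simp [hp, Finset.sum_ite_eq', Finset.mem_univ]
  have hexp_bound : ∑ t ∈ Finset.range T, l (∑ j, p j * S t (x t) j) (lam t) (y t) ≤ (T:ℝ) := by
    calc ∑ t ∈ Finset.range T, l (∑ j, p j * S t (x t) j) (lam t) (y t)
        ≤ ∑ t ∈ Finset.range T, (1:ℝ) := by
          apply Finset.sum_le_sum
          intro t _
          rw [hsum t, hl]
          have h1 := (hf01 (S t (x t) k) (y t)).2
          have h2 : lam t * (g (S t (x t) k) (y t) - γ) ≤ 0 :=
            mul_nonpos_of_nonneg_of_nonpos (hlam t).1 (by linarith [hexpert t])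
          linarith
      _ = (T:ℝ) := by simp
  have hlhs : ∀ t, lamMax * (g (b t) (y t) - γ) ≤ l (b t) lamMax (y t) := by
    intro t
    rw [hl]
    have := (hf01 (b t) (y t)).1
    linarith
  have hlb : lamMax * (∑ t ∈ Finset.range T, g (b t) (y t) - (T:ℝ) * γ)
      ≤ ∑ t ∈ Finset.range T, l (b t) lamMax (y t) := by
    calc lamMax * (∑ t ∈ Finset.range T, g (b t) (y t) - (T:ℝ) * γ)
        = ∑ t ∈ Finset.range T, lamMax * (g (b t) (y t) - γ) := by
          rw [mul_sub, Finset.mul_sum]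
          rw [show (∑ t ∈ Finset.range T, lamMax * (g (b t) (y t) - γ))
            = ∑ t ∈ Finset.range T, (lamMax * g (b t) (y t) - lamMax * γ) from by
              apply Finset.sum_congr rfl; intro t _; ring]
          rw [Finset.sum_sub_distrib, Finset.sum_const, Finset.card_range]
          push_cast; ring
      _ ≤ _ := Finset.sum_le_sum fun t _ => hlhs t
  have h1 : (1 / T : ℝ) * ∑ t ∈ Finset.range T, l (b t) lamMax (y t) ≤ R + 1 := by
    have h2 : (1 / T : ℝ) * ∑ t ∈ Finset.range T, l (∑ j, p j * S t (x t) j) (lam t) (y t) ≤ 1 := by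
      rw [div_mul_eq_mul_div, one_mul, div_le_one hTpos]
      exact hexp_bound
    linarith
  have h3 : lamMax * ((1 / T : ℝ) * ∑ t ∈ Finset.range T, g (b t) (y t) - γ) ≤ R + 1 := by
    have heq : lamMax * ((1 / T : ℝ) * ∑ t ∈ Finset.range T, g (b t) (y t) - γ)
        = (1 / T : ℝ) * (lamMax * (∑ t ∈ Finset.range T, g (b t) (y t) - (T:ℝ) * γ)) := by
      field_simp
    rw [heq]
    calc (1 / T : ℝ) * (lamMax * (∑ t ∈ Finset.range T, g (b t) (y t) - (T:ℝ) * γ))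
        ≤ (1 / T : ℝ) * ∑ t ∈ Finset.range T, l (b t) lamMax (y t) :=
          mul_le_mul_of_nonneg_left hlb (by positivity)
      _ ≤ R + 1 := h1
  rw [← sub_le_iff_le_add', le_div_iff₀ hlamPos]
  linarith [h3]
end
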